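/- Let p be a prime integer and M a period knot (p,p)-mosaic. If M is p_{(k,1)}-f.period for some k, then the equivalence class of M under cyclic rotations of rows and columns contains exactly p distinct mosaics, namely t_{x,0}(M) for x = 0,1,…,p−1. If M is not (1,1)-f.period, not (1,p)-f.period and not p_{(k,1)}-f.period for any k, then its equivalence class contains exactly p² distinct mosaics. -/

import Mathlib

/-- Connection point on the left edge, for each of the eleven mosaic tiles `T_0, …, T_10`. -/
def cpL : Fin 11 → Bool := ![false, true, false, false, true, true, false, true, true, true, true]
/-- Connection point on the right edge. -/
def cpR : Fin 11 → Bool := ![false, false, true, true, false, true, false, true, true, true, true]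
/-- Connection point on the top edge. -/
def cpT : Fin 11 → Bool := ![false, false, false, true, true, false, true, true, true, true, true]
/-- Connection point on the bottom edge. -/
def cpB : Fin 11 → Bool := ![false, true, true, false, false, false, true, true, true, true, true]

/-- An `(m,n)`-mosaic: an `m × n` matrix of mosaic tiles (row `i`, column `j`). -/
abbrev Mosaic (m n : ℕ) := Fin m → Fin n → Fin 11

/-- Suitably connected: contiguous tiles agree about connection points on their common edge. -/
def SuitablyConnected {m n : ℕ} (M : Mosaic m n) : Prop :=
  (∀ (i : Fin m) (j : Fin n) (h : j.val + 1 < n),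
      cpR (M i j) = cpL (M i ⟨j.val + 1, h⟩)) ∧
  (∀ (i : Fin m) (h : i.val + 1 < m) (j : Fin n),
      cpB (M i j) = cpT (M ⟨i.val + 1, h⟩ j))

/-- Suitably ∂-connected: tiles on opposite ends of a row (resp. column) agree about
connection points on the outer boundary edges. -/
def SuitablyBdryConnected {m n : ℕ} (M : Mosaic m n) : Prop :=
  (∀ (i : Fin m) (j j' : Fin n), j.val = 0 → j'.val = n - 1 →
      cpL (M i j) = cpR (M i j')) ∧
  (∀ (i i' : Fin m) (j : Fin n), i.val = 0 → i'.val = m - 1 →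
      cpT (M i j) = cpB (M i' j))

/-- A period knot `(m,n)`-mosaic. -/
def PeriodKnot {m n : ℕ} (M : Mosaic m n) : Prop :=
  SuitablyConnected M ∧ SuitablyBdryConnected M

/-- `D_P^{(m,n)}`, the number of period knot `(m,n)`-mosaics. -/
noncomputable def DP (m n : ℕ) : ℕ := Nat.card {M : Mosaic m n // PeriodKnot M}

/-- No connection points on the boundary of the mosaic. -/
def BoundaryFree {m n : ℕ} (M : Mosaic m n) : Prop :=
  ∀ (i : Fin m) (j : Fin n),
    (j.val = 0 → cpL (M i j) = false) ∧ (j.val = n - 1 → cpR (M i j) = false) ∧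
    (i.val = 0 → cpT (M i j) = false) ∧ (i.val = m - 1 → cpB (M i j) = false)

/-- `D^{(m,n)}`, the number of knot `(m,n)`-mosaics. -/
noncomputable def DK (m n : ℕ) : ℕ :=
  Nat.card {M : Mosaic m n // SuitablyConnected M ∧ BoundaryFree M}

/-- Subtract `x` from the index `i`, modulo `m`. -/
def shiftIdx {m : ℕ} (x : ℤ) (i : Fin m) : Fin m :=
  ⟨(((i : ℤ) - x) % (m : ℤ)).toNat, by
    have hm : (0 : ℤ) < (m : ℤ) := by exact_mod_cast i.pos
    have h1 := Int.emod_lt_of_pos ((i : ℤ) - x) hm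
    have h2 := Int.emod_nonneg ((i : ℤ) - x) (by omega : (m : ℤ) ≠ 0)
    omega⟩

/-- The cyclic rotation `t_{x,y}`: `(t_{x,y} M)_{i,j} = M_{i-x, j-y}` (indices mod `m`, `n`). -/
def tshift {m n : ℕ} (x y : ℤ) (M : Mosaic m n) : Mosaic m n :=
  fun i j => M (shiftIdx x i) (shiftIdx y j)

/-- `M` is a `(p,q)`-f.period mosaic: `p` is the least positive integer with `M = t_{p,0}(M)`
and `q` is the least positive integer with `M = t_{0,q}(M)`. -/
def IsFPeriod {m n : ℕ} (p q : ℕ) (M : Mosaic m n) : Prop :=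
  IsLeast {a : ℕ | 0 < a ∧ M = tshift (a : ℤ) 0 M} p ∧
  IsLeast {b : ℕ | 0 < b ∧ M = tshift 0 (b : ℤ) M} q

/-- `d_{p,q}`: the number of `(p,q)`-f.period knot `(m,n)`-mosaics. -/
noncomputable def dFP (m n p q : ℕ) : ℕ :=
  Nat.card {M : Mosaic m n // PeriodKnot M ∧ IsFPeriod p q M}

/-- Equivalence of period knot mosaics under cyclic rotations of rows and columns. -/
def torRel (m n : ℕ) (A B : {M : Mosaic m n // PeriodKnot M}) : Prop :=
  ∃ x y : ℤ, tshift x y A.val = B.val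

/-- `D_T^{(m,n)}`, the number of toroidal knot `(m,n)`-mosaics. -/
noncomputable def DT (m n : ℕ) : ℕ := Nat.card (Quot (torRel m n))

/-- `M` is a `p_{(k,1)}`-f.period knot `(p,p)`-mosaic: not `(1,1)`-f.period and `M = t_{k,1}(M)`. -/
def IsPk1FPeriod {p : ℕ} (k : ℕ) (M : Mosaic p p) : Prop :=
  ¬ IsFPeriod 1 1 M ∧ M = tshift (k : ℤ) 1 M

/-- `d_{p_{(k,1)}}`: the number of `p_{(k,1)}`-f.period knot `(p,p)`-mosaics. -/
noncomputable def dPk (p k : ℕ) : ℕ :=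
  Nat.card {M : Mosaic p p // PeriodKnot M ∧ IsPk1FPeriod k M}

/-- `d_{p²}`: the number of period knot `(p,p)`-mosaics that are not `(1,1)`-, not `(1,p)`-
and not `p_{(k,1)}`-f.period for any `k`. -/
noncomputable def dPsq (p : ℕ) : ℕ :=
  Nat.card {M : Mosaic p p // PeriodKnot M ∧ ¬ IsFPeriod 1 1 M ∧ ¬ IsFPeriod 1 p M ∧
    ∀ k < p, ¬ IsPk1FPeriod k M}

/-- Entries of the pair `(X_k, O_k)` of `2^k × 2^k` matrices defined by the block recursion
`X_{k+1} = [[X_k, O_k], [O_k, X_k]]`, `O_{k+1} = [[O_k, X_k], [X_k, 4 O_k]]`,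
seeded with `X_0 = O_0 = [1]` (the most significant bit selects the block). -/
def matsXO : ℕ → ℕ → ℕ → ℕ × ℕ
  | 0, _, _ => (1, 1)
  | k + 1, i, j =>
    let v := matsXO k (i % 2 ^ k) (j % 2 ^ k)
    if i / 2 ^ k % 2 = 0 then
      if j / 2 ^ k % 2 = 0 then (v.1, v.2) else (v.2, v.1)
    else
      if j / 2 ^ k % 2 = 0 then (v.2, v.1) else (v.1, 4 * v.2)

/-- The matrix `X_k`. -/
def Xmat (m : ℕ) : Matrix (Fin (2 ^ m)) (Fin (2 ^ m)) ℕ :=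
  Matrix.of fun i j => (matsXO m i j).1

/-- The matrix `O_k`. -/
def Omat (m : ℕ) : Matrix (Fin (2 ^ m)) (Fin (2 ^ m)) ℕ :=
  Matrix.of fun i j => (matsXO m i j).2

/-- Entries of the quadruple `(X_k^+, X_k^-, O_k^+, O_k^-)` of `2^k × 2^k` matrices defined by
the block recursions `X_{k+1}^+ = [[X_k^+, O_k^-],[O_k^-, X_k^+]]`,
`X_{k+1}^- = [[X_k^-, O_k^+],[O_k^+, X_k^-]]`, `O_{k+1}^+ = [[O_k^+, X_k^-],[X_k^-, 4 O_k^+]]`,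
`O_{k+1}^- = [[O_k^-, X_k^+],[X_k^+, 4 O_k^-]]`, seeded with `X_0^+ = O_0^+ = [1]`,
`X_0^- = O_0^- = [0]` (the most significant bit selects the block). -/
def matsPM : ℕ → ℕ → ℕ → ℕ × ℕ × ℕ × ℕ
  | 0, _, _ => (1, 0, 1, 0)
  | k + 1, i, j =>
    let v := matsPM k (i % 2 ^ k) (j % 2 ^ k)
    match v with
    | (xp, xm, op, om) =>
      if i / 2 ^ k % 2 = 0 then
        if j / 2 ^ k % 2 = 0 then (xp, xm, op, om) else (om, op, xm, xp)
      else
        if j / 2 ^ k % 2 = 0 then (om, op, xm, xp) else (xp, xm, 4 * op, 4 * om)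

/-- The matrix `X_m^+`. -/
def Xplus (m : ℕ) : Matrix (Fin (2 ^ m)) (Fin (2 ^ m)) ℕ :=
  Matrix.of fun i j => (matsPM m i j).1
/-- The matrix `X_m^-`. -/
def Xminus (m : ℕ) : Matrix (Fin (2 ^ m)) (Fin (2 ^ m)) ℕ :=
  Matrix.of fun i j => (matsPM m i j).2.1
/-- The matrix `O_m^+`. -/
def Oplus (m : ℕ) : Matrix (Fin (2 ^ m)) (Fin (2 ^ m)) ℕ :=
  Matrix.of fun i j => (matsPM m i j).2.2.1
/-- The matrix `O_m^-`. -/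
def Ominus (m : ℕ) : Matrix (Fin (2 ^ m)) (Fin (2 ^ m)) ℕ :=
  Matrix.of fun i j => (matsPM m i j).2.2.2

/-- The boundary state (a word in `{o,x}^m`) encoded by `a : Fin (2^m)` in reverse
lexicographic order: the first position is the least significant bit. -/
def stateOf {m : ℕ} (a : Fin (2 ^ m)) : Fin m → Bool := fun r => (a : ℕ).testBit r.val

/-- The `l`-state of a mosaic. -/
def lState {m n : ℕ} (hn : 0 < n) (M : Mosaic m n) : Fin m → Bool :=
  fun i => cpL (M i ⟨0, hn⟩)
/-- The `r`-state of a mosaic. -/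
def rState {m n : ℕ} (hn : 0 < n) (M : Mosaic m n) : Fin m → Bool :=
  fun i => cpR (M i ⟨n - 1, Nat.sub_lt hn Nat.one_pos⟩)
/-- The `t`-state of a mosaic. -/
def tState {m n : ℕ} (hm : 0 < m) (M : Mosaic m n) : Fin n → Bool :=
  fun j => cpT (M ⟨0, hm⟩ j)
/-- The `b`-state of a mosaic. -/
def bState {m n : ℕ} (hm : 0 < m) (M : Mosaic m n) : Fin n → Bool :=
  fun j => cpB (M ⟨m - 1, Nat.sub_lt hm Nat.one_pos⟩ j)

/-- The state matrix `N^{(m,n)+}`: its `(a,b)` entry counts the suitably connected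
`(m,n)`-mosaics whose `t`-state equals its `b`-state, whose `l`-state is the `a`-th state
and whose `r`-state is the `b`-th state. -/
noncomputable def Nplus (m n : ℕ) (hm : 0 < m) (hn : 0 < n) :
    Matrix (Fin (2 ^ m)) (Fin (2 ^ m)) ℕ :=
  Matrix.of fun a b => Nat.card {M : Mosaic m n // SuitablyConnected M ∧
    tState hm M = bState hm M ∧ lState hn M = stateOf a ∧ rState hn M = stateOf b}

/-- The index map `α` for `tr^{(k)}`: cyclic shift by `k` positions of the `p`-bit binary
representation, i.e. `α(i) ≡ 2^k i (mod 2^p - 1)` for `0 < i < 2^p - 1`, `α(0) = 0`,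
`α(2^p-1) = 2^p-1`. -/
def alphaIdx (p k : ℕ) (i : Fin (2 ^ p)) : Fin (2 ^ p) :=
  if h : (i : ℕ) = 2 ^ p - 1 then i
  else ⟨(2 ^ k * (i : ℕ)) % (2 ^ p - 1), by
    have h1 : 0 < 2 ^ p := Nat.two_pow_pos p
    have h2 : (i : ℕ) < 2 ^ p := i.isLt
    have h3 : 0 < 2 ^ p - 1 := by omega
    have h4 := Nat.mod_lt (2 ^ k * (i : ℕ)) h3
    omega⟩

/-- The twisted trace `tr^{(k)}(A) = Σ_i A_{i+1, α(i)+1}`. -/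
def trk (p k : ℕ) (A : Matrix (Fin (2 ^ p)) (Fin (2 ^ p)) ℕ) : ℕ :=
  ∑ i, A i (alphaIdx p k i)

/-!
The rotations `t_{x,y}` form an action of `ℤ²` on `(p,p)`-mosaics that factors through
`(ℤ/p)²`, so the periods of `M` form a subgroup `H ≤ ℤ²` containing `pℤ²`. As `ℤ/p` is a field,
a period `(x, y)` with `p ∤ y` can be rescaled to a period `(k, 1)`, and a period `(x, 0)` with
`p ∤ x` to the period `(1, 0)`. For a `p_{(k,1)}`-f.period mosaic, `(1, 0) ∉ H` (otherwise also
`(0, 1) ∈ H` and `M` is `(1,1)`-f.period), so `H = {(x, y) | x ≡ k y}` and `x ↦ t_{x,0}(M)` is a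
bijection from `ℤ/p` onto the orbit. In the other case neither kind of period exists, so
`H = pℤ²` and the orbit is in bijection with `(ℤ/p)²`.
-/

section Shift

variable {m n : ℕ}

lemma shiftIdx_coe (x : ℤ) (i : Fin m) : ((shiftIdx x i : ℕ) : ℤ) = ((i : ℤ) - x) % m :=
  Int.toNat_of_nonneg (Int.emod_nonneg _ (by have := i.pos; omega))

lemma shiftIdx_zero (i : Fin m) : shiftIdx 0 i = i := by
  refine Fin.ext (Nat.cast_injective (R := ℤ) ?_)
  rw [shiftIdx_coe, sub_zero]
  exact Int.emod_eq_of_lt (by positivity) (by exact_mod_cast i.isLt)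

lemma shiftIdx_shiftIdx (x x' : ℤ) (i : Fin m) :
    shiftIdx x' (shiftIdx x i) = shiftIdx (x + x') i := by
  refine Fin.ext (Nat.cast_injective (R := ℤ) ?_)
  rw [shiftIdx_coe, shiftIdx_coe, shiftIdx_coe, ← sub_sub]
  exact (Int.mod_modEq _ _).sub_right x'

lemma shiftIdx_congr {x x' : ℤ} (h : (x : ZMod m) = x') (i : Fin m) :
    shiftIdx x i = shiftIdx x' i := by
  refine Fin.ext (Nat.cast_injective (R := ℤ) ?_)
  rw [shiftIdx_coe, shiftIdx_coe]
  exact ((ZMod.intCast_eq_intCast_iff _ _ _).1 h).sub_left _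

lemma tshift_zero (M : Mosaic m n) : tshift 0 0 M = M := by
  funext i j
  simp only [tshift, shiftIdx_zero]

lemma tshift_tshift (x y x' y' : ℤ) (M : Mosaic m n) :
    tshift x y (tshift x' y' M) = tshift (x + x') (y + y') M := by
  funext i j
  simp only [tshift, shiftIdx_shiftIdx]

lemma tshift_congr {x x' y y' : ℤ} (hx : (x : ZMod m) = x') (hy : (y : ZMod n) = y')
    (M : Mosaic m n) : tshift x y M = tshift x' y' M := by
  funext i j
  simp only [tshift, shiftIdx_congr hx, shiftIdx_congr hy]

def Mosaic.periods (M : Mosaic m n) : AddSubgroup (ℤ × ℤ) where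
  carrier := {v | tshift v.1 v.2 M = M}
  zero_mem' := tshift_zero M
  add_mem' {v w} hv hw := by
    simp only [Set.mem_ofPred_eq, Prod.fst_add, Prod.snd_add] at *
    rw [← tshift_tshift, hw, hv]
  neg_mem' {v} hv := by
    simp only [Set.mem_ofPred_eq, Prod.fst_neg, Prod.snd_neg] at *
    conv_lhs => rw [← hv]
    rw [tshift_tshift, neg_add_cancel, neg_add_cancel, tshift_zero]

@[simp]
lemma Mosaic.mem_periods {M : Mosaic m n} {v : ℤ × ℤ} :
    v ∈ M.periods ↔ tshift v.1 v.2 M = M :=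
  Iff.rfl

lemma Mosaic.mem_periods_of_intCast_eq_zero (M : Mosaic m n) (v : ℤ × ℤ)
    (h₁ : (v.1 : ZMod m) = 0) (h₂ : (v.2 : ZMod n) = 0) : v ∈ M.periods := by
  rw [mem_periods, tshift_congr (h₁.trans Int.cast_zero.symm) (h₂.trans Int.cast_zero.symm),
    tshift_zero]

lemma tshift_eq_tshift_iff {x y x' y' : ℤ} {M : Mosaic m n} :
    tshift x y M = tshift x' y' M ↔ (x - x', y - y') ∈ M.periods := by
  refine ⟨fun h => ?_, fun h => ?_⟩
  · have := congrArg (tshift (-x') (-y')) h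
    rwa [tshift_tshift, tshift_tshift, neg_add_cancel, neg_add_cancel, tshift_zero,
      neg_add_eq_sub, neg_add_eq_sub] at this
  · have := congrArg (tshift x' y') h
    rwa [tshift_tshift, add_sub_cancel, add_sub_cancel] at this

end Shift

section PrimeLattice

lemma mem_of_intCast_eq_smul {m n : ℕ} {H : AddSubgroup (ℤ × ℤ)}
    (hH : ∀ v : ℤ × ℤ, (v.1 : ZMod m) = 0 → (v.2 : ZMod n) = 0 → v ∈ H)
    {v w : ℤ × ℤ} (hv : v ∈ H) (c : ℤ)
    (h₁ : (w.1 : ZMod m) = c * v.1) (h₂ : (w.2 : ZMod n) = c * v.2) : w ∈ H := by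
  have hd : w - c • v ∈ H := hH _ (by simp [h₁]) (by simp [h₂])
  simpa using add_mem hd (zsmul_mem hv c)

variable {p : ℕ} [Fact p.Prime] {H : AddSubgroup (ℤ × ℤ)}

lemma intCast_fst_eq_zero (hH : ∀ v : ℤ × ℤ, (v.1 : ZMod p) = 0 → (v.2 : ZMod p) = 0 → v ∈ H)
    (h₁ : ((1 : ℤ), (0 : ℤ)) ∉ H) {x : ℤ} (hx : (x, 0) ∈ H) : (x : ZMod p) = 0 := by
  by_contra h
  obtain ⟨c, hc⟩ := ZMod.intCast_surjective (x : ZMod p)⁻¹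
  exact h₁ (mem_of_intCast_eq_smul hH hx c (by simp [hc, inv_mul_cancel₀ h]) (by simp))

lemma intCast_snd_eq_zero (hH : ∀ v : ℤ × ℤ, (v.1 : ZMod p) = 0 → (v.2 : ZMod p) = 0 → v ∈ H)
    (hk : ∀ k < p, ((k : ℤ), (1 : ℤ)) ∉ H) {v : ℤ × ℤ} (hv : v ∈ H) : (v.2 : ZMod p) = 0 := by
  by_contra h
  obtain ⟨c, hc⟩ := ZMod.intCast_surjective (v.2 : ZMod p)⁻¹
  exact hk _ (ZMod.val_lt ((c * v.1 : ℤ) : ZMod p))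
    (mem_of_intCast_eq_smul hH hv c (by simp) (by simp [hc, inv_mul_cancel₀ h]))

lemma intCast_eq_zero_of_mem
    (hH : ∀ v : ℤ × ℤ, (v.1 : ZMod p) = 0 → (v.2 : ZMod p) = 0 → v ∈ H)
    (h₁ : ((1 : ℤ), (0 : ℤ)) ∉ H) (hk : ∀ k < p, ((k : ℤ), (1 : ℤ)) ∉ H) {v : ℤ × ℤ}
    (hv : v ∈ H) : (v.1 : ZMod p) = 0 ∧ (v.2 : ZMod p) = 0 := by
  have h₂ := intCast_snd_eq_zero hH hk hv
  exact ⟨intCast_fst_eq_zero hH h₁ (mem_of_intCast_eq_smul hH hv 1 (by simp) (by simp [h₂])), h₂⟩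

end PrimeLattice

section Orbit

variable {m n : ℕ} {M : Mosaic m n}

lemma tshift_eq_tshift_val_of_mem_periods [NeZero m] {k : ℤ} (hk : (k, 1) ∈ M.periods)
    (x y : ℤ) :
    tshift x y M = tshift (((x - y * k : ℤ) : ZMod m).val : ℤ) 0 M :=
  tshift_eq_tshift_iff.2 <|
    mem_of_intCast_eq_smul M.mem_periods_of_intCast_eq_zero hk y (by simp) (by simp)

lemma eq_of_tshift_eq_tshift (h : ∀ x : ℤ, (x, 0) ∈ M.periods → (x : ZMod m) = 0)
    {x x' : ℕ} (hx : x < m) (hx' : x' < m) (he : tshift (x : ℤ) 0 M = tshift (x' : ℤ) 0 M) :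
    x = x' := by
  have hxx' := h _ (by simpa using tshift_eq_tshift_iff.1 he)
  rw [Int.cast_sub, sub_eq_zero, Int.cast_natCast, Int.cast_natCast,
    ZMod.natCast_eq_natCast_iff', Nat.mod_eq_of_lt hx, Nat.mod_eq_of_lt hx'] at hxx'
  exact hxx'

lemma card_orbit_eq_of_mem_periods [NeZero m] {k : ℤ} (hk : (k, 1) ∈ M.periods)
    (h : ∀ x : ℤ, (x, 0) ∈ M.periods → (x : ZMod m) = 0) :
    Nat.card {M' : Mosaic m n // ∃ x y : ℤ, tshift x y M = M'} = m := by
  let f : ZMod m → {M' : Mosaic m n // ∃ x y : ℤ, tshift x y M = M'} :=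
    fun a => ⟨tshift (a.val : ℤ) 0 M, _, _, rfl⟩
  have hf : Function.Bijective f := by
    refine ⟨fun a b hab => ZMod.val_injective m ?_, ?_⟩
    · exact eq_of_tshift_eq_tshift h (ZMod.val_lt a) (ZMod.val_lt b) (congrArg Subtype.val hab)
    · rintro ⟨_, x, y, rfl⟩
      exact ⟨_, Subtype.ext (tshift_eq_tshift_val_of_mem_periods hk x y).symm⟩
  rw [← Nat.card_eq_of_bijective f hf, Nat.card_zmod]

lemma card_orbit_eq_mul [NeZero m] [NeZero n]
    (h : ∀ v ∈ M.periods, (v.1 : ZMod m) = 0 ∧ (v.2 : ZMod n) = 0) :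
    Nat.card {M' : Mosaic m n // ∃ x y : ℤ, tshift x y M = M'} = m * n := by
  let f : ZMod m × ZMod n → {M' : Mosaic m n // ∃ x y : ℤ, tshift x y M = M'} :=
    fun a => ⟨tshift (a.1.val : ℤ) (a.2.val : ℤ) M, _, _, rfl⟩
  have hf : Function.Bijective f := by
    refine ⟨fun a b hab => ?_, ?_⟩
    · obtain ⟨h₁, h₂⟩ := h _ (tshift_eq_tshift_iff.1 (congrArg Subtype.val hab))
      simp only [Int.cast_sub, Int.cast_natCast, ZMod.natCast_zmod_val, sub_eq_zero] at h₁ h₂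
      exact Prod.ext h₁ h₂
    · rintro ⟨_, x, y, rfl⟩
      exact ⟨((x : ZMod m), (y : ZMod n)), Subtype.ext (tshift_congr (by simp) (by simp) M)⟩
  rw [← Nat.card_eq_of_bijective f hf, Nat.card_prod, Nat.card_zmod, Nat.card_zmod]

end Orbit

lemma isLeast_one_setOf {P : ℕ → Prop} (h : P 1) : IsLeast {a | 0 < a ∧ P a} 1 :=
  ⟨⟨one_pos, h⟩, fun _ ha => ha.1⟩

lemma isFPeriod_one_one {m n : ℕ} {M : Mosaic m n} (h₁ : ((1 : ℤ), (0 : ℤ)) ∈ M.periods)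
    (h₂ : ((0 : ℤ), (1 : ℤ)) ∈ M.periods) : IsFPeriod 1 1 M :=
  ⟨isLeast_one_setOf (by simpa using h₁.symm), isLeast_one_setOf (by simpa using h₂.symm)⟩

lemma isFPeriod_one_prime {p : ℕ} [hp : Fact p.Prime] {M : Mosaic p p}
    (h₁ : ((1 : ℤ), (0 : ℤ)) ∈ M.periods) (hk : ∀ k < p, ((k : ℤ), (1 : ℤ)) ∉ M.periods) :
    IsFPeriod 1 p M := by
  refine ⟨isLeast_one_setOf (by simpa using h₁.symm), ⟨hp.out.pos, ?_⟩, fun b ⟨hb, hbM⟩ => ?_⟩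
  · exact (M.mem_periods_of_intCast_eq_zero (0, p) (by simp) (by simp)).symm
  · have := intCast_snd_eq_zero M.mem_periods_of_intCast_eq_zero hk (v := (0, b)) hbM.symm
    exact Nat.le_of_dvd hb ((ZMod.natCast_eq_zero_iff _ _).1 (by simpa using this))

theorem prime_square_orbit_sizes_general (p : ℕ) (hP : p.Prime) (M : Mosaic p p) :
    (∀ k < p, IsPk1FPeriod k M →
      (∀ x y : ℤ, ∃ x' : ℕ, x' < p ∧ tshift x y M = tshift (x' : ℤ) 0 M) ∧
      (∀ x x' : ℕ, x < p → x' < p →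
        tshift (x : ℤ) 0 M = tshift (x' : ℤ) 0 M → x = x') ∧
      Nat.card {M' : Mosaic p p // ∃ x y : ℤ, tshift x y M = M'} = p) ∧
    ((¬ IsFPeriod 1 1 M ∧ ¬ IsFPeriod 1 p M ∧ ∀ k < p, ¬ IsPk1FPeriod k M) →
      Nat.card {M' : Mosaic p p // ∃ x y : ℤ, tshift x y M = M'} = p ^ 2) := by
  have := Fact.mk hP
  have hker := M.mem_periods_of_intCast_eq_zero
  refine ⟨fun k _ ⟨h11, hk⟩ => ?_, fun ⟨h11, h1p, hall⟩ => ?_⟩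
  · have hk : ((k : ℤ), (1 : ℤ)) ∈ M.periods := hk.symm
    have h10 : ((1 : ℤ), (0 : ℤ)) ∉ M.periods := fun h10 =>
      h11 (isFPeriod_one_one h10 (by simpa using sub_mem hk (zsmul_mem h10 k)))
    have hrow : ∀ x : ℤ, (x, 0) ∈ M.periods → (x : ZMod p) = 0 :=
      fun _ => intCast_fst_eq_zero hker h10
    exact ⟨fun x y => ⟨_, ZMod.val_lt _, tshift_eq_tshift_val_of_mem_periods hk x y⟩,
      fun _ _ => eq_of_tshift_eq_tshift hrow, card_orbit_eq_of_mem_periods hk hrow⟩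
  · have hk : ∀ k < p, ((k : ℤ), (1 : ℤ)) ∉ M.periods := fun k hk h => hall k hk ⟨h11, h.symm⟩
    have h10 : ((1 : ℤ), (0 : ℤ)) ∉ M.periods := fun h10 => h1p (isFPeriod_one_prime h10 hk)
    rw [sq]
    exact card_orbit_eq_mul fun _ => intCast_eq_zero_of_mem hker h10 hk

/-- For a prime `p` and a period knot `(p,p)`-mosaic `M`: if `M` is
`p_{(k,1)}`-f.period for some `k`, its equivalence class under cyclic rotations consists of
exactly the `p` distinct mosaics `t_{x,0}(M)`, `0 ≤ x < p`; if `M` is not `(1,1)`-, not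
`(1,p)`- and not `p_{(k,1)}`-f.period for any `k`, its class has exactly `p²` elements. -/
theorem prime_square_orbit_sizes (p : ℕ) (hP : p.Prime) (M : Mosaic p p)
    (hM : PeriodKnot M) :
    (∀ k < p, IsPk1FPeriod k M →
      (∀ x y : ℤ, ∃ x' : ℕ, x' < p ∧ tshift x y M = tshift (x' : ℤ) 0 M) ∧
      (∀ x x' : ℕ, x < p → x' < p →
        tshift (x : ℤ) 0 M = tshift (x' : ℤ) 0 M → x = x') ∧
      Nat.card {M' : Mosaic p p // ∃ x y : ℤ, tshift x y M = M'} = p) ∧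
    ((¬ IsFPeriod 1 1 M ∧ ¬ IsFPeriod 1 p M ∧ ∀ k < p, ¬ IsPk1FPeriod k M) →
      Nat.card {M' : Mosaic p p // ∃ x y : ℤ, tshift x y M = M'} = p ^ 2) :=
  prime_square_orbit_sizes_general p hP M
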